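/- arXiv:2506.16850 — 2 statements merged into one kernel-verified Lean document; each statement's English description precedes it below -/
import Mathlib

section
/- Let ρ be an n×n density matrix with eigenvalues 0 ≤ λ₁ ≤ λ₂ ≤ ⋯ ≤ λ_n, let A, B be n×n self-adjoint complex matrices, and let q ∈ ℝ with 0 < q ≤ 1. Then (λ_n + qλ₁)²·|Tr[ρ[A₀,B₀]_q]|² ≤ (1+q)²·(λ_n − qλ₁)²·V_ρ(A)·V_ρ(B). -/
/-! In an orthonormal eigenbasis of `ρ`, with eigenvalues `d k ∈ [λ₁, λₙ]` and `a`, `b` the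
matrices of `A₀`, `B₀`, one has `Tr[ρ[A₀,B₀]_q] = ∑ₖₗ (d k - q d l) a k l b l k` and
`2 V_ρ(A) = ∑ₖₗ (d k + d l) |a k l|²`. Pairing the `(k, l)` and `(l, k)` terms of the first sum,
`(λₙ + qλ₁)` times each pair is at most `(1 + q)(λₙ - qλ₁)(d k + d l) |a k l| |b k l|`, an
elementary inequality in `d k, d l ∈ [λ₁, λₙ]`; the Cauchy–Schwarz inequality with weights
`d k + d l` then bounds the resulting sum by the variances. -/

open Matrix ComplexOrder

/-- `A₀ = A - Tr[ρA]·I`, the centered operator. -/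
noncomputable def shift {n : ℕ} (ρ A : Matrix (Fin n) (Fin n) ℂ) : Matrix (Fin n) (Fin n) ℂ :=
  A - (ρ * A).trace • (1 : Matrix (Fin n) (Fin n) ℂ)

/-- `V_ρ(A) = Tr[ρA²] - (Tr[ρA])²` (a real number for self-adjoint `A` and density `ρ`). -/
noncomputable def variance {n : ℕ} (ρ A : Matrix (Fin n) (Fin n) ℂ) : ℝ :=
  ((ρ * (A * A)).trace - ((ρ * A).trace) ^ 2).re

/-- the q-commutator `[A,B]_q = AB - q·BA`. -/
noncomputable def qComm {n : ℕ} (q : ℝ) (A B : Matrix (Fin n) (Fin n) ℂ) :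
    Matrix (Fin n) (Fin n) ℂ :=
  A * B - (q : ℂ) • (B * A)

/-- the q-anti-commutator `{A,B}_q = AB + q·BA`. -/
noncomputable def qAnti {n : ℕ} (q : ℝ) (A B : Matrix (Fin n) (Fin n) ℂ) :
    Matrix (Fin n) (Fin n) ℂ :=
  A * B + (q : ℂ) • (B * A)

/-- `lam` lists the eigenvalues of `ρ` (with multiplicity) in increasing order. -/
def IsOrderedEigenvalues {n : ℕ} {ρ : Matrix (Fin n) (Fin n) ℂ}
    (hρ : ρ.IsHermitian) (lam : Fin n → ℝ) : Prop :=
  Monotone lam ∧ ∃ σ : Equiv.Perm (Fin n), ∀ i, lam i = hρ.eigenvalues (σ i)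

section Eigenbasis

variable {ι : Type*} [Fintype ι] [DecidableEq ι]

theorem Matrix.trace_diagonal_mul_mul {R : Type*} [CommSemiring R]
    (d : ι → R) (x y : Matrix ι ι R) :
    (diagonal d * (x * y)).trace = ∑ k, ∑ l, d k * (x k l * y l k) := by
  simp_rw [trace, diag, diagonal_mul]
  simp_rw [mul_apply, Finset.mul_sum]

theorem Matrix.trace_conjStarAlgAut {R : Type*} [CommRing R] [StarRing R]
    (u : unitary (Matrix ι ι R)) (X : Matrix ι ι R) :
    (Unitary.conjStarAlgAut R _ u X).trace = X.trace := by
  rw [Unitary.conjStarAlgAut_apply, trace_mul_cycle, Unitary.coe_star_mul_self, one_mul]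

theorem Matrix.IsHermitian.trace_mul_eq_trace_diagonal_mul {𝕜 : Type*} [RCLike 𝕜]
    {ρ : Matrix ι ι 𝕜} (hρ : ρ.IsHermitian) (M : Matrix ι ι 𝕜) :
    (ρ * M).trace = (diagonal (RCLike.ofReal ∘ hρ.eigenvalues) *
      Unitary.conjStarAlgAut 𝕜 _ (star hρ.eigenvectorUnitary) M).trace := by
  rw [← hρ.conjStarAlgAut_star_eigenvectorUnitary, ← map_mul, trace_conjStarAlgAut]

theorem Matrix.IsHermitian.conjStarAlgAut {𝕜 : Type*} [RCLike 𝕜] {X : Matrix ι ι 𝕜}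
    (hX : X.IsHermitian) (u : unitary (Matrix ι ι 𝕜)) :
    (Unitary.conjStarAlgAut 𝕜 _ u X).IsHermitian :=
  IsSelfAdjoint.map hX _

end Eigenbasis

theorem map_qComm {n : ℕ} {F : Type*}
    [FunLike F (Matrix (Fin n) (Fin n) ℂ) (Matrix (Fin n) (Fin n) ℂ)] [AlgHomClass F ℂ _ _] (f : F)
    (q : ℝ) (X Y : Matrix (Fin n) (Fin n) ℂ) :
    f (qComm q X Y) = qComm q (f X) (f Y) := by
  simp only [qComm, map_sub, map_mul, map_smul]

theorem variance_eq_re_trace_mul_shift_mul_shift {n : ℕ} {ρ : Matrix (Fin n) (Fin n) ℂ}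
    (htr : ρ.trace = 1) (A : Matrix (Fin n) (Fin n) ℂ) :
    variance ρ A = (ρ * (shift ρ A * shift ρ A)).trace.re := by
  simp only [variance, shift, Matrix.sub_mul, Matrix.mul_sub, Matrix.smul_mul, Matrix.mul_smul,
    Matrix.mul_one, Matrix.one_mul, trace_sub, trace_smul, smul_eq_mul, htr]
  ring_nf

theorem Matrix.IsHermitian.shift {n : ℕ} {ρ A : Matrix (Fin n) (Fin n) ℂ} (hA : A.IsHermitian)
    (hρ : ρ.IsHermitian) : (shift ρ A).IsHermitian := by
  have hreal : star (ρ * A).trace = (ρ * A).trace := by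
    rw [← trace_conjTranspose, conjTranspose_mul, hA.eq, hρ.eq, trace_mul_comm]
  rw [_root_.shift, IsHermitian, conjTranspose_sub, conjTranspose_smul, conjTranspose_one, hA.eq,
    hreal]

theorem IsOrderedEigenvalues.eigenvalues_mem_Icc {n : ℕ} {ρ : Matrix (Fin (n + 1)) (Fin (n + 1)) ℂ}
    {hρ : ρ.IsHermitian} {lam : Fin (n + 1) → ℝ} (h : IsOrderedEigenvalues hρ lam)
    (k : Fin (n + 1)) : hρ.eigenvalues k ∈ Set.Icc (lam 0) (lam (Fin.last n)) := by
  obtain ⟨hmono, σ, hσ⟩ := h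
  rw [← σ.apply_symm_apply k, ← hσ]
  exact ⟨hmono (Fin.zero_le _), hmono (Fin.le_last _)⟩

theorem norm_mul_add_mul_conj_le {q m L x y : ℝ} (z : ℂ) (hq : 0 ≤ q) (hq1 : q ≤ 1) (hm : 0 ≤ m)
    (hx : x ∈ Set.Icc m L) (hy : y ∈ Set.Icc m L) :
    (L + q * m) * ‖((x : ℂ) - q * y) * z + ((y : ℂ) - q * x) * starRingEnd ℂ z‖ ≤
      (1 + q) * (L - q * m) * ((x + y) * ‖z‖) := by
  obtain ⟨hmx, hxL⟩ := hx
  obtain ⟨hmy, hyL⟩ := hy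
  set w := ((x : ℂ) - q * y) * z + ((y : ℂ) - q * x) * starRingEnd ℂ z
  have hre : w.re = (1 - q) * (x + y) * z.re := by
    simp only [w, Complex.add_re, Complex.mul_re, Complex.sub_re, Complex.sub_im, Complex.mul_im,
      Complex.ofReal_re, Complex.ofReal_im, Complex.conj_re, Complex.conj_im]
    ring
  have him : w.im = (1 + q) * (x - y) * z.im := by
    simp only [w, Complex.add_im, Complex.mul_re, Complex.sub_re, Complex.sub_im, Complex.mul_im,
      Complex.ofReal_re, Complex.ofReal_im, Complex.conj_re, Complex.conj_im]
    ring
  have hqm : q * m ≤ m := mul_le_of_le_one_left hm hq1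
  have hrot : (1 - q) * (L + q * m) ≤ (1 + q) * (L - q * m) := by nlinarith
  have hdiff : |(L + q * m) * (x - y)| ≤ (L - q * m) * (x + y) := by
    rw [abs_le]; constructor <;> nlinarith
  have hsum : 0 ≤ (1 + q) * (L - q * m) * (x + y) :=
    mul_nonneg (mul_nonneg (by linarith) (by linarith)) (by linarith)
  rw [← sq_le_sq₀ (mul_nonneg (by nlinarith) (norm_nonneg w))
    (by rw [← mul_assoc]; exact mul_nonneg hsum (norm_nonneg z)),
    mul_pow, mul_pow, Complex.sq_norm, Complex.normSq_apply, hre, him]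
  have h1 := mul_le_mul_of_nonneg_right (pow_le_pow_left₀ (by nlinarith) hrot 2)
    (sq_nonneg ((x + y) * z.re))
  have h2 := mul_le_mul_of_nonneg_right (sq_le_sq' (abs_le.mp hdiff).1 (abs_le.mp hdiff).2)
    (sq_nonneg ((1 + q) * z.im))
  rw [mul_pow (x + y), Complex.sq_norm, Complex.normSq_apply]
  linear_combination h1 + h2

section Diagonal

variable {n : ℕ} (d : Fin n → ℝ) (q : ℝ) {a b : Matrix (Fin n) (Fin n) ℂ}

theorem trace_diagonal_mul_qComm :
    (diagonal (fun k => (d k : ℂ)) * qComm q a b).trace =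
      ∑ k, ∑ l, ((d k : ℂ) - q * d l) * (a k l * b l k) := by
  rw [qComm, Matrix.mul_sub, Matrix.mul_smul, trace_sub, trace_smul, trace_diagonal_mul_mul,
    trace_diagonal_mul_mul, Finset.sum_comm (f := fun k l => _ * (b k l * a l k)), smul_eq_mul,
    Finset.mul_sum, ← Finset.sum_sub_distrib]
  refine Finset.sum_congr rfl fun k _ => ?_
  rw [Finset.mul_sum, ← Finset.sum_sub_distrib]
  exact Finset.sum_congr rfl fun l _ => by ring

theorem two_mul_trace_diagonal_mul_qComm (ha : a.IsHermitian) (hb : b.IsHermitian) :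
    2 * (diagonal (fun k => (d k : ℂ)) * qComm q a b).trace =
      ∑ k, ∑ l, (((d k : ℂ) - q * d l) * (a k l * b l k) +
        ((d l : ℂ) - q * d k) * starRingEnd ℂ (a k l * b l k)) := by
  have hconj : ∀ k l, starRingEnd ℂ (a k l * b l k) = a l k * b k l := fun k l => by
    rw [map_mul, ← ha.apply l k, ← hb.apply k l]
    rfl
  simp only [hconj, Finset.sum_add_distrib]
  rw [two_mul, trace_diagonal_mul_qComm, Finset.sum_comm (f := fun k l => ((d l : ℂ) - _) * _)]

theorem two_mul_re_trace_diagonal_mul_self (ha : a.IsHermitian) :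
    2 * (diagonal (fun k => (d k : ℂ)) * (a * a)).trace.re =
      ∑ k, ∑ l, (d k + d l) * ‖a k l‖ ^ 2 := by
  have hre : (diagonal (fun k => (d k : ℂ)) * (a * a)).trace.re = ∑ k, ∑ l, d k * ‖a k l‖ ^ 2 := by
    simp only [trace_diagonal_mul_mul, Complex.re_sum]
    refine Finset.sum_congr rfl fun k _ => Finset.sum_congr rfl fun l _ => ?_
    rw [← ha.apply l k, Complex.star_def, Complex.mul_conj, ← Complex.ofReal_mul, Complex.ofReal_re,
      Complex.normSq_eq_norm_sq]
  have hsymm : ∀ k l, ‖a l k‖ = ‖a k l‖ := fun k l => by rw [← ha.apply k l, norm_star]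
  rw [two_mul, hre]
  nth_rw 2 [Finset.sum_comm]
  rw [← Finset.sum_add_distrib]
  refine Finset.sum_congr rfl fun k _ => ?_
  rw [← Finset.sum_add_distrib]
  exact Finset.sum_congr rfl fun l _ => by rw [hsymm k l]; ring

end Diagonal

theorem sq_mul_sq_norm_trace_diagonal_mul_qComm_le {n : ℕ} {d : Fin (n + 1) → ℝ} {m L q : ℝ}
    (hd : ∀ k, d k ∈ Set.Icc m L) (hm : 0 ≤ m) (hq : 0 ≤ q) (hq1 : q ≤ 1)
    {a b : Matrix (Fin (n + 1)) (Fin (n + 1)) ℂ} (ha : a.IsHermitian) (hb : b.IsHermitian) :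
    (L + q * m) ^ 2 * ‖(diagonal (fun k => (d k : ℂ)) * qComm q a b).trace‖ ^ 2 ≤
      (1 + q) ^ 2 * (L - q * m) ^ 2 * (diagonal (fun k => (d k : ℂ)) * (a * a)).trace.re *
        (diagonal (fun k => (d k : ℂ)) * (b * b)).trace.re := by
  set T := (diagonal (fun k => (d k : ℂ)) * qComm q a b).trace
  set S := ∑ k, ∑ l, (d k + d l) * (‖a k l‖ * ‖b k l‖)
  have hw : ∀ k l, 0 ≤ d k + d l := fun k l => by linarith [(hd k).1, (hd l).1]
  have hLm : 0 ≤ L + q * m := by nlinarith [(hd 0).1.trans (hd 0).2]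
  have hT : (L + q * m) * (2 * ‖T‖) ≤ (1 + q) * (L - q * m) * S := by
    have hnorm : ∀ k l, ‖a k l * b l k‖ = ‖a k l‖ * ‖b k l‖ := fun k l => by
      rw [norm_mul, ← hb.apply k l, norm_star]
    calc (L + q * m) * (2 * ‖T‖) = (L + q * m) * ‖2 * T‖ := by simp
      _ ≤ (L + q * m) * ∑ k, ∑ l, ‖((d k : ℂ) - q * d l) * (a k l * b l k) +
            ((d l : ℂ) - q * d k) * starRingEnd ℂ (a k l * b l k)‖ := by
        rw [two_mul_trace_diagonal_mul_qComm d q ha hb]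
        gcongr
        exact (norm_sum_le _ _).trans (Finset.sum_le_sum fun k _ => norm_sum_le _ _)
      _ ≤ (1 + q) * (L - q * m) * S := by
        simp only [S, Finset.mul_sum, ← hnorm]
        refine Finset.sum_le_sum fun k _ => Finset.sum_le_sum fun l _ => ?_
        exact norm_mul_add_mul_conj_le _ hq hq1 hm (hd k) (hd l)
  have hS : S ^ 2 ≤ (2 * (diagonal (fun k => (d k : ℂ)) * (a * a)).trace.re) *
      (2 * (diagonal (fun k => (d k : ℂ)) * (b * b)).trace.re) := by
    rw [two_mul_re_trace_diagonal_mul_self d ha, two_mul_re_trace_diagonal_mul_self d hb]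
    simp only [S, ← Finset.sum_product']
    exact Finset.sum_sq_le_sum_mul_sum_of_sq_le_mul _ (fun p _ => mul_nonneg (hw _ _) (sq_nonneg _))
      (fun p _ => mul_nonneg (hw _ _) (sq_nonneg _)) fun p _ => le_of_eq (by ring)
  have hSq : ((L + q * m) * (2 * ‖T‖)) ^ 2 ≤ ((1 + q) * (L - q * m) * S) ^ 2 :=
    pow_le_pow_left₀ (mul_nonneg hLm (by positivity)) hT 2
  linear_combination (hSq + mul_le_mul_of_nonneg_left hS (sq_nonneg ((1 + q) * (L - q * m)))) / 4

/-- Refined uncertainty relation, case `0 < q ≤ 1`: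
`(λₙ + qλ₁)²·|Tr[ρ[A₀,B₀]_q]|² ≤ (1+q)²·(λₙ − qλ₁)²·V_ρ(A)·V_ρ(B)`. -/
theorem refined_uncertainty_of_pos_le_one {n : ℕ}
    (ρ A B : Matrix (Fin (n + 1)) (Fin (n + 1)) ℂ)
    (hρ : ρ.PosSemidef) (htr : ρ.trace = 1)
    (hA : A.IsHermitian) (hB : B.IsHermitian)
    (lam : Fin (n + 1) → ℝ) (hlam : IsOrderedEigenvalues hρ.1 lam)
    (hlam0 : 0 ≤ lam 0) (q : ℝ) (hq0 : 0 < q) (hq1 : q ≤ 1) :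
    (lam (Fin.last n) + q * lam 0) ^ 2 *
        ‖(ρ * qComm q (shift ρ A) (shift ρ B)).trace‖ ^ 2 ≤
      (1 + q) ^ 2 * (lam (Fin.last n) - q * lam 0) ^ 2 *
        variance ρ A * variance ρ B := by
  set φ := Unitary.conjStarAlgAut ℂ _ (star hρ.1.eigenvectorUnitary)
  have hvar : ∀ X, variance ρ X = (diagonal (RCLike.ofReal ∘ hρ.1.eigenvalues) *
      (φ (shift ρ X) * φ (shift ρ X))).trace.re := fun X => by
    rw [variance_eq_re_trace_mul_shift_mul_shift htr, hρ.1.trace_mul_eq_trace_diagonal_mul, map_mul]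
  rw [hρ.1.trace_mul_eq_trace_diagonal_mul, map_qComm, hvar A, hvar B]
  exact sq_mul_sq_norm_trace_diagonal_mul_qComm_le hlam.eigenvalues_mem_Icc hlam0 hq0.le hq1
    ((hA.shift hρ.1).conjStarAlgAut _) ((hB.shift hρ.1).conjStarAlgAut _)
end

section
/- Let ρ be an n×n density matrix with eigenvalues 0 ≤ λ₁ ≤ λ₂ ≤ ⋯ ≤ λ_n, let A, B be n×n self-adjoint complex matrices, and let q ∈ ℝ with q > 1. Then q²·(qλ_n + λ₁)²·|Tr[ρ[A₀,B₀]_{1/q}]|² = (qλ_n + λ₁)²·|Tr[ρ[B₀,A₀]_q]|², and (qλ_n + λ₁)²·|Tr[ρ[B₀,A₀]_q]|² ≤ (1+q)²·(qλ_n − λ₁)²·V_ρ(A)·V_ρ(B). -/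
open Matrix ComplexOrder

/-!
In an orthonormal eigenbasis of `ρ`, with eigenvalues `dᵢ` and `a, b` the matrices of `A₀, B₀`,
`Tr[ρ[B₀,A₀]_q] = ∑ᵢⱼ (dⱼ - q dᵢ) aᵢⱼ bⱼᵢ` and `V_ρ(A) = ∑ᵢⱼ dᵢ |aᵢⱼ|²`. For `dᵢ, dⱼ ∈ [λ₁, λₙ]`
one has `(qλₙ + λ₁) |dⱼ - q dᵢ| ≤ (qλₙ - λ₁) (q dᵢ + dⱼ)`, so Cauchy–Schwarz with the nonnegative
weights `q dᵢ + dⱼ` applies; since `|aᵢⱼ| = |aⱼᵢ|`, `∑ᵢⱼ (q dᵢ + dⱼ) |aᵢⱼ|² = (1 + q) V_ρ(A)`.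
The equality is `[B₀,A₀]_q = -q [A₀,B₀]_{1/q}`.
-/

section

open Finset

lemma mul_abs_sub_le_mul_add {m M q x y : ℝ} (hm : 0 ≤ m) (hq : 1 ≤ q)
    (hx : x ∈ Set.Icc m M) (hy : y ∈ Set.Icc m M) :
    (q * M + m) * |y - q * x| ≤ (q * M - m) * (q * x + y) := by
  obtain ⟨hmx, hxM⟩ := hx
  obtain ⟨hmy, hyM⟩ := hy
  have hx0 : 0 ≤ x := hm.trans hmx
  have hy0 : 0 ≤ y := hm.trans hmy
  rcases abs_cases (y - q * x) with ⟨h, -⟩ | ⟨h, -⟩ <;> rw [h]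
  · -- reduces to `m * y ≤ q² * M * x`
    nlinarith [mul_le_mul hmx hyM hy0 hx0, mul_le_mul hq hq zero_le_one (by linarith),
      mul_nonneg hx0 (hx0.trans hxM)]
  · -- reduces to `m * x ≤ M * y`
    nlinarith [mul_le_mul hmy hxM hx0 hy0]

variable {ι : Type*} [Fintype ι]

lemma sum_sum_mul_add_mul_of_symm (d : ι → ℝ) {a : ι → ι → ℝ} (ha : ∀ i j, a j i = a i j)
    (q : ℝ) : ∑ i, ∑ j, (q * d i + d j) * a i j = (1 + q) * ∑ i, ∑ j, d i * a i j := by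
  have hswap : ∑ i, ∑ j, d j * a i j = ∑ i, ∑ j, d i * a i j := by
    rw [sum_comm]
    simp only [ha]
  simp only [add_mul, sum_add_distrib, hswap, mul_assoc, ← mul_sum]
  ring

lemma sq_sum_sum_mul_mul_le {w a b : ι → ι → ℝ} (hw : ∀ i j, 0 ≤ w i j) :
    (∑ i, ∑ j, w i j * (a i j * b i j)) ^ 2 ≤
      (∑ i, ∑ j, w i j * a i j ^ 2) * ∑ i, ∑ j, w i j * b i j ^ 2 := by
  simp only [← Fintype.sum_prod_type']
  exact sum_sq_le_sum_mul_sum_of_sq_le_mul _ (fun p _ => mul_nonneg (hw p.1 p.2) (sq_nonneg _))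
    (fun p _ => mul_nonneg (hw p.1 p.2) (sq_nonneg _)) fun p _ => le_of_eq (by ring)

lemma sq_mul_sum_sum_abs_sub_mul_le {d : ι → ℝ} {a b : ι → ι → ℝ} {m M q : ℝ} (hm : 0 ≤ m)
    (hmM : m ≤ M) (hq : 1 ≤ q) (hd : ∀ i, d i ∈ Set.Icc m M)
    (ha : ∀ i j, a j i = a i j) (hb : ∀ i j, b j i = b i j)
    (ha₀ : ∀ i j, 0 ≤ a i j) (hb₀ : ∀ i j, 0 ≤ b i j) :
    ((q * M + m) * ∑ i, ∑ j, |d j - q * d i| * (a i j * b i j)) ^ 2 ≤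
      (1 + q) ^ 2 * (q * M - m) ^ 2 * (∑ i, ∑ j, d i * a i j ^ 2) *
        ∑ i, ∑ j, d i * b i j ^ 2 := by
  have hw : ∀ i j, 0 ≤ q * d i + d j := fun i j =>
    add_nonneg (mul_nonneg (by linarith) (hm.trans (hd i).1)) (hm.trans (hd j).1)
  have hpointwise : (q * M + m) * ∑ i, ∑ j, |d j - q * d i| * (a i j * b i j) ≤
      (q * M - m) * ∑ i, ∑ j, (q * d i + d j) * (a i j * b i j) := by
    simp only [mul_sum]
    refine sum_le_sum fun i _ => sum_le_sum fun j _ => ?_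
    rw [← mul_assoc, ← mul_assoc (q * M - m)]
    exact mul_le_mul_of_nonneg_right (mul_abs_sub_le_mul_add hm hq (hd i) (hd j))
      (mul_nonneg (ha₀ i j) (hb₀ i j))
  calc ((q * M + m) * ∑ i, ∑ j, |d j - q * d i| * (a i j * b i j)) ^ 2
      ≤ ((q * M - m) * ∑ i, ∑ j, (q * d i + d j) * (a i j * b i j)) ^ 2 := by
        refine pow_le_pow_left₀ (mul_nonneg (by nlinarith) ?_) hpointwise 2
        exact sum_nonneg fun i _ => sum_nonneg fun j _ =>
          mul_nonneg (abs_nonneg _) (mul_nonneg (ha₀ i j) (hb₀ i j))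
    _ ≤ (q * M - m) ^ 2 * ((∑ i, ∑ j, (q * d i + d j) * a i j ^ 2) *
          ∑ i, ∑ j, (q * d i + d j) * b i j ^ 2) := by
        rw [mul_pow]
        gcongr
        exact sq_sum_sum_mul_mul_le hw
    _ = _ := by
        rw [sum_sum_mul_add_mul_of_symm d (a := fun i j => a i j ^ 2) (by simp [ha]),
          sum_sum_mul_add_mul_of_symm d (a := fun i j => b i j ^ 2) (by simp [hb])]
        ring

end

namespace Matrix.IsHermitian

lemma norm_apply_comm {ι : Type*} {X : Matrix ι ι ℂ} (hX : X.IsHermitian) (i j : ι) :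
    ‖X j i‖ = ‖X i j‖ := by
  rw [← hX.apply i j, norm_star]

lemma star_trace_mul {ι : Type*} [Fintype ι] {ρ A : Matrix ι ι ℂ} (hρ : ρ.IsHermitian)
    (hA : A.IsHermitian) : star (ρ * A).trace = (ρ * A).trace := by
  rw [← trace_conjTranspose, conjTranspose_mul, hA.eq, hρ.eq, trace_mul_comm]

variable {ι : Type*} [Fintype ι] [DecidableEq ι] {ρ : Matrix ι ι ℂ} (hρ : ρ.IsHermitian)

noncomputable def inEigenbasis : Matrix ι ι ℂ ≃⋆ₐ[ℂ] Matrix ι ι ℂ :=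
  Unitary.conjStarAlgAut ℂ _ (star hρ.eigenvectorUnitary)

lemma inEigenbasis_self : hρ.inEigenbasis ρ = diagonal (fun i => (hρ.eigenvalues i : ℂ)) :=
  hρ.conjStarAlgAut_star_eigenvectorUnitary

lemma trace_inEigenbasis (X : Matrix ι ι ℂ) : (hρ.inEigenbasis X).trace = X.trace := by
  rw [inEigenbasis, Unitary.conjStarAlgAut_star_apply, trace_mul_cycle,
    Unitary.mul_star_self_of_mem hρ.eigenvectorUnitary.2, Matrix.one_mul]

lemma isHermitian_inEigenbasis {X : Matrix ι ι ℂ} (hX : X.IsHermitian) :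
    (hρ.inEigenbasis X).IsHermitian := by
  rw [IsHermitian, ← star_eq_conjTranspose, ← map_star, star_eq_conjTranspose, hX.eq]

lemma trace_mul_eq_sum (X : Matrix ι ι ℂ) :
    (ρ * X).trace = ∑ i, (hρ.eigenvalues i : ℂ) * hρ.inEigenbasis X i i := by
  rw [← hρ.trace_inEigenbasis, map_mul, inEigenbasis_self, trace]
  simp [diagonal_mul]

lemma trace_mul_mul_eq_sum (X Y : Matrix ι ι ℂ) :
    (ρ * (X * Y)).trace =
      ∑ i, ∑ j, (hρ.eigenvalues i : ℂ) * (hρ.inEigenbasis X i j * hρ.inEigenbasis Y j i) := by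
  rw [hρ.trace_mul_eq_sum, map_mul]
  simp only [mul_apply, Finset.mul_sum]

lemma trace_mul_mul_self_eq_sum {X : Matrix ι ι ℂ} (hX : X.IsHermitian) :
    (ρ * (X * X)).trace = ((∑ i, ∑ j, hρ.eigenvalues i * ‖hρ.inEigenbasis X i j‖ ^ 2 : ℝ) : ℂ) := by
  have hX' := hρ.isHermitian_inEigenbasis hX
  rw [hρ.trace_mul_mul_eq_sum]
  push_cast
  refine Finset.sum_congr rfl fun i _ => Finset.sum_congr rfl fun j _ => ?_
  rw [← hX'.apply j i, ← Complex.mul_conj']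
  rfl

end Matrix.IsHermitian

section

variable {n : ℕ} {ρ : Matrix (Fin n) (Fin n) ℂ}

lemma isHermitian_shift (hρ : ρ.IsHermitian) {A : Matrix (Fin n) (Fin n) ℂ} (hA : A.IsHermitian) :
    (shift ρ A).IsHermitian :=
  hA.sub <| by rw [IsHermitian, conjTranspose_smul, conjTranspose_one, hρ.star_trace_mul hA]

lemma trace_mul_shift_mul_shift (htr : ρ.trace = 1) (A B : Matrix (Fin n) (Fin n) ℂ) :
    (ρ * (shift ρ A * shift ρ B)).trace = (ρ * (A * B)).trace - (ρ * A).trace * (ρ * B).trace := by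
  simp only [shift, sub_mul, mul_sub, smul_mul_assoc, mul_smul_comm, Matrix.mul_one,
    Matrix.one_mul, trace_sub, trace_smul, smul_eq_mul, htr]
  ring

lemma variance_eq_sum (hρ : ρ.IsHermitian) (htr : ρ.trace = 1) {A : Matrix (Fin n) (Fin n) ℂ}
    (hA : A.IsHermitian) :
    variance ρ A = ∑ i, ∑ j, hρ.eigenvalues i * ‖hρ.inEigenbasis (shift ρ A) i j‖ ^ 2 := by
  rw [variance, sq ((ρ * A).trace), ← trace_mul_shift_mul_shift htr,
    hρ.trace_mul_mul_self_eq_sum (isHermitian_shift hρ hA), Complex.ofReal_re]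

lemma trace_mul_qComm_eq_sum (hρ : ρ.IsHermitian) (q : ℝ) (A B : Matrix (Fin n) (Fin n) ℂ) :
    (ρ * qComm q B A).trace = ∑ i, ∑ j, ((hρ.eigenvalues j - q * hρ.eigenvalues i : ℝ) : ℂ) *
      (hρ.inEigenbasis A i j * hρ.inEigenbasis B j i) := by
  rw [qComm, mul_sub, mul_smul_comm, trace_sub, trace_smul, hρ.trace_mul_mul_eq_sum,
    hρ.trace_mul_mul_eq_sum, Finset.sum_comm, smul_eq_mul, Finset.mul_sum,
    ← Finset.sum_sub_distrib]
  refine Finset.sum_congr rfl fun i _ => ?_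
  rw [Finset.mul_sum, ← Finset.sum_sub_distrib]
  refine Finset.sum_congr rfl fun j _ => ?_
  push_cast
  ring

lemma norm_trace_mul_qComm_le (hρ : ρ.IsHermitian) (q : ℝ) (A : Matrix (Fin n) (Fin n) ℂ)
    {B : Matrix (Fin n) (Fin n) ℂ} (hB : B.IsHermitian) :
    ‖(ρ * qComm q B A).trace‖ ≤ ∑ i, ∑ j, |hρ.eigenvalues j - q * hρ.eigenvalues i| *
      (‖hρ.inEigenbasis A i j‖ * ‖hρ.inEigenbasis B i j‖) := by
  rw [trace_mul_qComm_eq_sum hρ]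
  refine (norm_sum_le _ _).trans (Finset.sum_le_sum fun i _ => ?_)
  refine (norm_sum_le _ _).trans (Finset.sum_le_sum fun j _ => ?_)
  rw [norm_mul, norm_mul, Complex.norm_real, Real.norm_eq_abs,
    (hρ.isHermitian_inEigenbasis hB).norm_apply_comm]

lemma qComm_swap {q : ℝ} (hq : q ≠ 0) (A B : Matrix (Fin n) (Fin n) ℂ) :
    qComm q B A = (-q : ℂ) • qComm q⁻¹ A B := by
  have : (-q : ℂ) * (q⁻¹ : ℝ) = -1 := by push_cast; field_simp
  rw [qComm, qComm, smul_sub, smul_smul, this]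
  module

lemma norm_trace_mul_qComm_swap {q : ℝ} (hq : 0 < q) (A B : Matrix (Fin n) (Fin n) ℂ) :
    ‖(ρ * qComm q B A).trace‖ = q * ‖(ρ * qComm q⁻¹ A B).trace‖ := by
  rw [qComm_swap hq.ne', mul_smul_comm, trace_smul, smul_eq_mul, norm_mul, norm_neg,
    Complex.norm_real, Real.norm_of_nonneg hq.le]

end

theorem refined_uncertainty_of_one_lt_general {n : ℕ}
    (ρ A B : Matrix (Fin (n + 1)) (Fin (n + 1)) ℂ)
    (hρ : ρ.PosSemidef) (htr : ρ.trace = 1)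
    (hA : A.IsHermitian) (hB : B.IsHermitian)
    (lam : Fin (n + 1) → ℝ) (hlam : IsOrderedEigenvalues hρ.1 lam)
    (q : ℝ) (hq : 1 < q) :
    q ^ 2 * (q * lam (Fin.last n) + lam 0) ^ 2 *
        ‖(ρ * qComm (1 / q) (shift ρ A) (shift ρ B)).trace‖ ^ 2 =
      (q * lam (Fin.last n) + lam 0) ^ 2 *
        ‖(ρ * qComm q (shift ρ B) (shift ρ A)).trace‖ ^ 2 ∧
    (q * lam (Fin.last n) + lam 0) ^ 2 *
        ‖(ρ * qComm q (shift ρ B) (shift ρ A)).trace‖ ^ 2 ≤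
      (1 + q) ^ 2 * (q * lam (Fin.last n) - lam 0) ^ 2 *
        variance ρ A * variance ρ B := by
  obtain ⟨hmono, σ, hσ⟩ := hlam
  have hm : 0 ≤ lam 0 := hσ 0 ▸ hρ.eigenvalues_nonneg _
  have hmM : lam 0 ≤ lam (Fin.last n) := hmono (Fin.zero_le _)
  have hd (i : Fin (n + 1)) : hρ.1.eigenvalues i ∈ Set.Icc (lam 0) (lam (Fin.last n)) := by
    rw [← σ.apply_symm_apply i, ← hσ]
    exact ⟨hmono (Fin.zero_le _), hmono (Fin.le_last _)⟩
  have hA₀ := hρ.1.isHermitian_inEigenbasis (isHermitian_shift hρ.1 hA)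
  have hB₀ := hρ.1.isHermitian_inEigenbasis (isHermitian_shift hρ.1 hB)
  refine ⟨?_, ?_⟩
  · rw [norm_trace_mul_qComm_swap (by linarith) (shift ρ A) (shift ρ B), one_div]
    ring
  · rw [variance_eq_sum hρ.1 htr hA, variance_eq_sum hρ.1 htr hB, ← mul_pow]
    refine le_trans ?_ (sq_mul_sum_sum_abs_sub_mul_le hm hmM hq.le hd
      hA₀.norm_apply_comm hB₀.norm_apply_comm (fun _ _ => norm_nonneg _) fun _ _ => norm_nonneg _)
    have hK : 0 ≤ q * lam (Fin.last n) + lam 0 := by nlinarith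
    gcongr
    exact norm_trace_mul_qComm_le hρ.1 q _ (isHermitian_shift hρ.1 hB)

/-- Refined uncertainty relation, case `q > 1`:
`q²·(qλₙ + λ₁)²·|Tr[ρ[A₀,B₀]_{1/q}]|² = (qλₙ + λ₁)²·|Tr[ρ[B₀,A₀]_q]|²` and
`(qλₙ + λ₁)²·|Tr[ρ[B₀,A₀]_q]|² ≤ (1+q)²·(qλₙ − λ₁)²·V_ρ(A)·V_ρ(B)`. -/
theorem refined_uncertainty_of_one_lt {n : ℕ}
    (ρ A B : Matrix (Fin (n + 1)) (Fin (n + 1)) ℂ)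
    (hρ : ρ.PosSemidef) (htr : ρ.trace = 1)
    (hA : A.IsHermitian) (hB : B.IsHermitian)
    (lam : Fin (n + 1) → ℝ) (hlam : IsOrderedEigenvalues hρ.1 lam)
    (hlam0 : 0 ≤ lam 0) (q : ℝ) (hq : 1 < q) :
    q ^ 2 * (q * lam (Fin.last n) + lam 0) ^ 2 *
        ‖(ρ * qComm (1 / q) (shift ρ A) (shift ρ B)).trace‖ ^ 2 =
      (q * lam (Fin.last n) + lam 0) ^ 2 *
        ‖(ρ * qComm q (shift ρ B) (shift ρ A)).trace‖ ^ 2 ∧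
    (q * lam (Fin.last n) + lam 0) ^ 2 *
        ‖(ρ * qComm q (shift ρ B) (shift ρ A)).trace‖ ^ 2 ≤
      (1 + q) ^ 2 * (q * lam (Fin.last n) - lam 0) ^ 2 *
        variance ρ A * variance ρ B :=
  refined_uncertainty_of_one_lt_general ρ A B hρ htr hA hB lam hlam q hq
end
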